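/- arXiv:1102.0310 — 3 statements merged into one kernel-verified Lean document; each statement's English description precedes it below -/
import Mathlib

section
/- For every t ∈ {1,…,n−1}, the weights λ^t = (t,0,…,0,−1,…,−1) (with t trailing entries −1) and μ^t = (1,…,1,0,…,0,−t) (with t leading entries 1) are primitive: each is nonzero, dominant, lies in the root lattice, and cannot be written as a sum μ+ν of two nonzero dominant weights μ, ν each having coordinate sum 0. -/
open MvPolynomial

/-- A weight `lam ∈ ℤⁿ` is dominant if `lam 1 ≥ lam 2 ≥ ⋯ ≥ lam n`. -/
def Dominant {n : ℕ} (lam : Fin n → ℤ) : Prop := ∀ i j : Fin n, i ≤ j → lam j ≤ lam i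

/-- A weight is primitive if it is nonzero, dominant, has coordinate sum `0` (i.e. lies
in the root lattice) and is not the sum of two nonzero dominant weights of coordinate
sum `0`. -/
def Primitive {n : ℕ} (lam : Fin n → ℤ) : Prop :=
  lam ≠ 0 ∧ Dominant lam ∧ (∑ i, lam i) = 0 ∧
    ∀ μ ν : Fin n → ℤ, μ ≠ 0 → ν ≠ 0 → Dominant μ → Dominant ν →
      (∑ i, μ i) = 0 → (∑ i, ν i) = 0 → lam ≠ μ + ν

/-- The weight `λ^t = (t,0,…,0,−1,…,−1)` with `t` trailing entries `−1` (`0`-indexed). -/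
def lamT (n t : ℕ) : Fin n → ℤ :=
  fun i => if (i : ℕ) = 0 then (t : ℤ) else if n - t ≤ (i : ℕ) then -1 else 0

/-- The weight `μ^t = (1,…,1,0,…,0,−t)` with `t` leading entries `1` (`0`-indexed). -/
def muT (n t : ℕ) : Fin n → ℤ :=
  fun i => if (i : ℕ) = n - 1 then -(t : ℤ) else if (i : ℕ) < t then 1 else 0

lemma first_pos {n : ℕ} (hn : 0 < n) {μ : Fin n → ℤ} (h0 : μ ≠ 0) (hd : Dominant μ)
    (hs : (∑ i, μ i) = 0) : 1 ≤ μ ⟨0, hn⟩ := by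
  by_contra h
  push_neg at h
  apply h0
  funext i
  have hle : ∀ j : Fin n, μ j ≤ 0 := fun j =>
    le_trans (hd ⟨0, hn⟩ j (by simp [Fin.le_def])) (by omega)
  have := (Finset.sum_eq_zero_iff_of_nonpos (fun j _ => hle j)).mp hs i (Finset.mem_univ i)
  simpa using this

lemma last_neg {n : ℕ} (hn : 0 < n) {μ : Fin n → ℤ} (h0 : μ ≠ 0) (hd : Dominant μ)
    (hs : (∑ i, μ i) = 0) : μ ⟨n - 1, by omega⟩ ≤ -1 := by
  by_contra h
  push_neg at h
  apply h0
  funext i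
  have hge : ∀ j : Fin n, 0 ≤ μ j := fun j =>
    le_trans (by omega) (hd j ⟨n - 1, by omega⟩ (by simp [Fin.le_def]; omega))
  have := (Finset.sum_eq_zero_iff_of_nonneg (fun j _ => hge j)).mp hs i (Finset.mem_univ i)
  simpa using this

lemma sum_lamT (n t : ℕ) (hn : 2 ≤ n) (ht : 1 ≤ t) (htn : t ≤ n - 1) :
    (∑ i, lamT n t i) = 0 := by
  simp only [lamT]
  rw [Fin.sum_univ_eq_sum_range (fun k => if k = 0 then (t:ℤ) else if n - t ≤ k then -1 else 0) n]
  have hsplit : ∀ i ∈ Finset.range n,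
      (if i = 0 then (t:ℤ) else if n - t ≤ i then -1 else 0)
        = (if i = 0 then (t:ℤ) else 0) + (if n - t ≤ i then -1 else 0) := by
    intro i hi
    split_ifs <;> omega
  rw [Finset.sum_congr rfl hsplit, Finset.sum_add_distrib]
  have h1 : (∑ i ∈ Finset.range n, if i = 0 then (t:ℤ) else 0) = t := by
    rw [Finset.sum_ite_eq' (Finset.range n) 0 (fun _ => (t:ℤ))]
    simp; omega
  have hfil : (Finset.range n).filter (fun i => n - t ≤ i) = Finset.Ico (n - t) n := by
    ext i; simp [Finset.mem_Ico]; omega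
  have h2 : (∑ i ∈ Finset.range n, if n - t ≤ i then (-1:ℤ) else 0) = -t := by
    rw [← Finset.sum_filter, hfil, Finset.sum_const, Nat.card_Ico]
    have : n - (n - t) = t := by omega
    rw [this]; simp
  rw [h1, h2]; ring

lemma sum_muT (n t : ℕ) (hn : 2 ≤ n) (ht : 1 ≤ t) (htn : t ≤ n - 1) :
    (∑ i, muT n t i) = 0 := by
  simp only [muT]
  rw [Fin.sum_univ_eq_sum_range (fun k => if k = n - 1 then -(t:ℤ) else if k < t then 1 else 0) n]
  have hsplit : ∀ i ∈ Finset.range n,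
      (if i = n - 1 then -(t:ℤ) else if i < t then 1 else 0)
        = (if i = n - 1 then -(t:ℤ) else 0) + (if i < t then 1 else 0) := by
    intro i hi
    split_ifs <;> omega
  rw [Finset.sum_congr rfl hsplit, Finset.sum_add_distrib]
  have h1 : (∑ i ∈ Finset.range n, if i = n - 1 then -(t:ℤ) else 0) = -t := by
    rw [Finset.sum_ite_eq' (Finset.range n) (n - 1) (fun _ => -(t:ℤ))]
    simp; omega
  have hfil : (Finset.range n).filter (fun i => i < t) = Finset.range t := by
    ext i; simp; omega
  have h2 : (∑ i ∈ Finset.range n, if i < t then (1:ℤ) else 0) = t := by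
    rw [← Finset.sum_filter, hfil, Finset.sum_const]
    simp
  rw [h1, h2]; ring

/-- For every `t ∈ {1,…,n−1}`, the weights `λ^t` and `μ^t` are primitive. -/
theorem stmt1 (n : ℕ) (hn : 2 ≤ n) (t : ℕ) (ht : 1 ≤ t) (htn : t ≤ n - 1) :
    Primitive (lamT n t) ∧ Primitive (muT n t) := by
  have hn0 : 0 < n := by omega
  constructor
  · refine ⟨?_, ?_, ?_, ?_⟩
    · intro h
      have := congrFun h ⟨0, hn0⟩
      simp [lamT] at this
      omega
    · intro i j hij
      rw [Fin.le_def] at hij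
      have hi := i.2
      have hj := j.2
      simp only [lamT]
      split_ifs <;> omega
    · exact sum_lamT n t hn ht htn
    · intro μ ν hμ hν hdμ hdν hsμ hsν heq
      have h1 := last_neg hn0 hμ hdμ hsμ
      have h2 := last_neg hn0 hν hdν hsν
      have h3 := congrFun heq ⟨n - 1, by omega⟩
      simp [lamT, Pi.add_apply] at h3
      rw [if_neg (by omega), if_pos (by omega)] at h3
      omega
  · refine ⟨?_, ?_, ?_, ?_⟩
    · intro h
      have := congrFun h ⟨0, hn0⟩
      simp [muT] at this
      rw [if_neg (by omega), if_pos (by omega)] at this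
      omega
    · intro i j hij
      rw [Fin.le_def] at hij
      have hi := i.2
      have hj := j.2
      simp only [muT]
      split_ifs <;> omega
    · exact sum_muT n t hn ht htn
    · intro μ ν hμ hν hdμ hdν hsμ hsν heq
      have h1 := first_pos hn0 hμ hdμ hsμ
      have h2 := first_pos hn0 hν hdν hsν
      have h3 := congrFun heq ⟨0, hn0⟩
      simp [muT, Pi.add_apply] at h3
      rw [if_neg (by omega), if_pos (by omega)] at h3
      omega
end

section
/- Let t ∈ {1,…,n−1}. The restrictions of the polynomials v_{t,I} to the set of nilpotent matrices are linearly independent over k: if (c_I) is a family of scalars in k indexed by the subsets I ⊆ {2,…,n} with |I| = t, and ∑_I c_I · v_{t,I}(A) = 0 for every nilpotent n×n matrix A over k, then c_I = 0 for all I. -/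
open MvPolynomial

/-- Evaluation of a polynomial function on `gl_n` at the `n x n` matrix `A`. -/
noncomputable def evalMat {k : Type*} [CommSemiring k] {n : ℕ}
    (A : Matrix (Fin n) (Fin n) k) (f : MvPolynomial (Fin n × Fin n) k) : k :=
  MvPolynomial.eval (fun p => A p.1 p.2) f

/-- `s_j`: the polynomial function on `gl_n` whose value at `A` is `(−1)^j` times the
coefficient of `X^(n−j)` in `det(X·1ₙ − A)`; defined as `(−1)^j` times the corresponding
coefficient of the characteristic polynomial of the generic `n×n` matrix `(ξ_ij)`. -/
noncomputable def sPoly (k : Type*) [Field k] (n : ℕ) (j : ℕ) :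
    MvPolynomial (Fin n × Fin n) k :=
  (-1) ^ j * ((Matrix.of fun i j : Fin n =>
    (MvPolynomial.X (i, j) : MvPolynomial (Fin n × Fin n) k)).charpoly.coeff (n - j))

/-- `v_{t,I}`: the determinant of the `t×t` matrix whose `(a, m)` entry is
`∂s_{j_m}/∂ξ_{i,n}` where `i = a+1` (`1`-indexed, so row `a` and column `n−1`
`0`-indexed) and `j_1 < ⋯ < j_t` are the elements of `I`. -/
noncomputable def vTI (k : Type*) [Field k] (n t : ℕ) (hn : 0 < n) (I : Finset ℕ) :
    MvPolynomial (Fin n × Fin n) k :=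
  Matrix.det (Matrix.of fun a m : Fin t =>
    MvPolynomial.pderiv (⟨(a : ℕ) % n, Nat.mod_lt _ hn⟩, ⟨n - 1, by omega⟩)
      (sPoly k n ((I.sort (· ≤ ·)).getD (m : ℕ) 0)))

/-!
By Jacobi's formula, `∂s_j/∂ξ_{i,n}` at `A` is `(-1)^(j+1)` times the coefficient of
`X^(n-j)` in the `(n, i)` entry of `adj(X - A)`. For nilpotent `A` this adjugate is the
geometric sum `∑ Xᵐ Aⁿ⁻¹⁻ᵐ`, so the derivative is `±(A^(j-1))_{n,i}`.

Given `I₀ = {j₁ < ⋯ < j_t}`, let `A` be the nilpotent matrix shifting along a chain of basis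
vectors that starts at index `n` and reaches index `a` after `j_a - 1` steps. Then
`(A^(j-1))_{n,a} = [j = j_a]`, so `v_{t,I}(A)` vanishes unless `I = I₀`, where it is a sign.
Evaluating the relation at `A` leaves `c_{I₀} = 0`.
-/

namespace Matrix

section CommRing

variable {ι R : Type*} [Fintype ι] [DecidableEq ι] [CommRing R]

theorem det_add_single (B : Matrix ι ι R) (i l : ι) (c : R) :
    (B + single i l c).det = B.det + c * B.adjugate l i := by
  have hcol : B + single i l c = B.updateCol l ((fun r => B r l) + c • Pi.single i 1) := by
    ext a b
    by_cases hb : b = l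
    · subst hb; by_cases ha : i = a <;> simp [ha]
    · simp [hb, Ne.symm hb]
  rw [hcol, det_updateCol_add, updateCol_eq_self, det_updateCol_smul,
    ← cramer_apply, cramer_eq_adjugate_mulVec, mulVec_single_one]
  rfl

theorem charpoly_add_single (M : Matrix ι ι R) (i l : ι) (r : R) :
    (M + single i l r).charpoly
      = M.charpoly - Polynomial.C r * (charmatrix M).adjugate l i := by
  have : charmatrix (M + single i l r) = charmatrix M + single i l (-Polynomial.C r) := by
    rw [charmatrix, charmatrix, map_add, RingHom.mapMatrix_apply, RingHom.mapMatrix_apply,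
      map_single, ← single_neg]
    abel
  rw [charpoly, this, det_add_single, ← charpoly]
  ring

theorem coeff_one_charpoly_map_add_single_X (A : Matrix ι ι R) (i l : ι) (m : ℕ) :
    ((A.map Polynomial.C + single i l Polynomial.X).charpoly.coeff m).coeff 1
      = -((charmatrix A).adjugate l i).coeff m := by
  have hadj : (charmatrix (A.map Polynomial.C)).adjugate l i
      = ((charmatrix A).adjugate l i).map Polynomial.C := by
    rw [charmatrix_map, ← Polynomial.coe_mapRingHom, ← RingHom.mapMatrix_apply,
      ← RingHom.map_adjugate]
    rfl
  rw [charpoly_add_single, hadj, charpoly_map]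
  simp [Polynomial.coeff_C_mul]

theorem adjugate_charmatrix_of_isNilpotent [IsDomain R] {A : Matrix ι ι R}
    (hA : IsNilpotent A) :
    (charmatrix A).adjugate = ∑ m ∈ Finset.range (Fintype.card ι),
      (Polynomial.X ^ m : Polynomial R) • (A ^ (Fintype.card ι - 1 - m)).map Polynomial.C := by
  set n := Fintype.card ι
  set G := ∑ m ∈ Finset.range n, (Polynomial.X ^ m : Polynomial R) •
      (A ^ (n - 1 - m)).map Polynomial.C with hGdef
  have hchar : A.charpoly = Polynomial.X ^ n :=
    sub_eq_zero.mp (isNilpotent_charpoly_sub_pow_of_isNilpotent hA).eq_zero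
  have hpow : A ^ n = 0 := by
    simpa [hchar] using aeval_self_charpoly A
  have hG : G * charmatrix A = A.charpoly • 1 := by
    have := (scalar_commute (Polynomial.X : Polynomial R) (fun _ => Commute.all _ _)
      (A.map Polynomial.C)).geom_sum₂_mul n
    rw [← Matrix.map_pow, hpow, Matrix.map_zero _ (map_zero _), sub_zero, ← map_pow] at this
    have hGsum : G = ∑ m ∈ Finset.range n,
        scalar ι (Polynomial.X : Polynomial R) ^ m * A.map Polynomial.C ^ (n - 1 - m) :=
      hGdef.trans <| Finset.sum_congr rfl fun m _ => by
        rw [← map_pow, ← Matrix.map_pow, scalar_apply, ← smul_eq_diagonal_mul]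
    rw [hGsum, hchar, smul_one_eq_diagonal, ← scalar_apply]
    exact this
  have hdet : A.charpoly ≠ 0 := hchar ▸ pow_ne_zero _ Polynomial.X_ne_zero
  apply smul_right_injective _ hdet
  calc A.charpoly • (charmatrix A).adjugate = (G * charmatrix A) * (charmatrix A).adjugate := by
        rw [hG, smul_mul, one_mul]
    _ = A.charpoly • G := by rw [mul_assoc, mul_adjugate, Matrix.mul_smul, mul_one]; rfl

theorem coeff_adjugate_charmatrix_of_isNilpotent [IsDomain R] {A : Matrix ι ι R}
    (hA : IsNilpotent A) (a b : ι) {m : ℕ} (hm : m < Fintype.card ι) :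
    ((charmatrix A).adjugate a b).coeff m = (A ^ (Fintype.card ι - 1 - m)) a b := by
  rw [adjugate_charmatrix_of_isNilpotent hA, sum_apply, Polynomial.finsetSum_coeff,
    Finset.sum_eq_single_of_mem m (Finset.mem_range.2 hm)]
  · simp
  · intro m' _ hm'
    simp [Ne.symm hm']

end CommRing

section Chain

variable {ι R : Type*} [Fintype ι] [DecidableEq ι] [Semiring R] {n : ℕ}

def chainMatrix (R : Type*) [Zero R] [One R] (e : ι ≃ Fin n) : Matrix ι ι R :=
  of fun p q => if (e q : ℕ) = e p + 1 then 1 else 0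

theorem chainMatrix_pow (e : ι ≃ Fin n) (m : ℕ) :
    chainMatrix R e ^ m = of fun p q => if (e q : ℕ) = e p + m then 1 else 0 := by
  induction m with
  | zero =>
    ext p q
    by_cases h : p = q
    · simp [h]
    · have : (e q : ℕ) ≠ e p := fun h' => h (e.injective (Fin.ext h'.symm))
      simp [one_apply_ne h, this]
  | succ m ih =>
    ext p q
    rw [pow_succ, ih, mul_apply]
    simp only [chainMatrix, of_apply, ite_mul, one_mul, zero_mul]
    rw [Fintype.sum_equiv e _ (fun s : Fin n => if (s : ℕ) = e p + m then
        (if (e q : ℕ) = s + 1 then (1 : R) else 0) else 0) (fun _ => rfl),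
      Fin.sum_univ_eq_sum_range (fun s => if s = (e p : ℕ) + m then
        (if (e q : ℕ) = s + 1 then (1 : R) else 0) else 0), Finset.sum_ite_eq']
    have := (e q).isLt
    simp only [Finset.mem_range]
    split_ifs <;> first | rfl | omega

theorem isNilpotent_chainMatrix (e : ι ≃ Fin n) : IsNilpotent (chainMatrix R e) := by
  refine ⟨n, ?_⟩
  rw [chainMatrix_pow]
  ext p q
  have := (e q).isLt
  simp only [of_apply, zero_apply, ite_eq_right_iff]
  omega

end Chain

end Matrix

theorem MvPolynomial.eval_pderiv_eq_coeff_one {σ R : Type*} [CommSemiring R] [DecidableEq σ]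
    (x : σ → R) (p : σ) (f : MvPolynomial σ R) :
    eval x (pderiv p f)
      = (eval₂ Polynomial.C (Polynomial.C ∘ x + Pi.single p Polynomial.X) f).coeff 1 := by
  suffices (eval₂ Polynomial.C (Polynomial.C ∘ x + Pi.single p Polynomial.X) f).coeff 0
        = eval x f ∧
      (eval₂ Polynomial.C (Polynomial.C ∘ x + Pi.single p Polynomial.X) f).coeff 1
        = eval x (pderiv p f) from this.2.symm
  induction f using MvPolynomial.induction_on with
  | C a => simp
  | add f g hf hg => simp [hf.1, hf.2, hg.1, hg.2]
  | mul_X f q hf =>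
    rw [eval₂_mul, eval₂_X, Polynomial.mul_coeff_zero, Polynomial.mul_coeff_one, hf.1, hf.2,
      pderiv_mul]
    by_cases hq : q = p
    · subst hq; simp [mul_comm, add_comm]
    · simp [hq, mul_comm]

theorem Equiv.Perm.exists_apply_eq_of_injective {α β : Type*} [Finite α] {g v : β → α}
    (hg : Function.Injective g) (hv : Function.Injective v) :
    ∃ e : Equiv.Perm α, ∀ b, e (g b) = v b := by
  classical
  let e₀ : Set.range g ≃ Set.range v :=
    (Equiv.ofInjective g hg).symm.trans (Equiv.ofInjective v hv)
  refine ⟨e₀.extendSubtype, fun b => ?_⟩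
  rw [e₀.extendSubtype_apply_of_mem _ ⟨b, rfl⟩]
  simp [e₀]

theorem Finset.getD_sort_eq_orderEmbOfFin {t : ℕ} (I : Finset ℕ) (h : I.card = t) (m : Fin t) :
    (I.sort (· ≤ ·)).getD m 0 = I.orderEmbOfFin h m := by
  rw [Finset.orderEmbOfFin_apply, List.getD_eq_getElem _ _ (by simp [h])]
  rfl

theorem Finset.det_ite_orderEmbOfFin_eq {k : Type*} [Field k] {t : ℕ} {I I₀ : Finset ℕ}
    (hcard : I.card = t) (hcard₀ : I₀.card = t) :
    (Matrix.of fun a m : Fin t =>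
      if I₀.orderEmbOfFin hcard₀ a = I.orderEmbOfFin hcard m then (1 : k) else 0).det =
      if I = I₀ then 1 else 0 := by
  split_ifs with hI
  · subst hI
    rw [← Matrix.det_one (n := Fin t)]
    congr 1
    ext a m
    simp [Matrix.one_apply]
  · obtain ⟨j, hjI, hjI₀⟩ := Finset.not_subset.mp fun hsub =>
      hI (Finset.eq_of_subset_of_card_le hsub (by rw [hcard, hcard₀]))
    obtain ⟨m, rfl⟩ : j ∈ Set.range (I.orderEmbOfFin hcard) := by
      rwa [Finset.range_orderEmbOfFin]
    refine Matrix.det_eq_zero_of_column_eq_zero m fun a => if_neg fun hJ => hjI₀ ?_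
    exact hJ ▸ I₀.orderEmbOfFin_mem hcard₀ a

theorem sPoly_eq_coeff_charpoly_univ (k : Type*) [Field k] (n j : ℕ) :
    sPoly k n j = (-1) ^ j * (Matrix.charpoly.univ k (Fin n)).coeff (n - j) := rfl

theorem evalMat_pderiv_sPoly {k : Type*} [Field k] {n : ℕ} (A : Matrix (Fin n) (Fin n) k)
    (i l : Fin n) (j : ℕ) :
    evalMat A (pderiv (i, l) (sPoly k n j))
      = (-1) ^ (j + 1) * ((Matrix.charmatrix A).adjugate l i).coeff (n - j) := by
  -- Differentiate along the line `A + X • E_{il}`.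
  have hline : Matrix.of (Function.curry (Polynomial.C ∘ (fun p => A p.1 p.2)
      + Pi.single (i, l) Polynomial.X)) = A.map Polynomial.C + Matrix.single i l Polynomial.X := by
    ext a b : 2
    by_cases h : i = a ∧ l = b
    · obtain ⟨rfl, rfl⟩ := h; simp
    · simp [h]
  have hsign : ((-1) ^ j : MvPolynomial (Fin n × Fin n) k) = C ((-1) ^ j) := by simp
  rw [sPoly_eq_coeff_charpoly_univ, hsign, pderiv_C_mul, evalMat, map_mul, eval_C,
    eval_pderiv_eq_coeff_one, ← coe_eval₂Hom, Matrix.charpoly.univ_coeff_eval₂Hom, hline,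
    Matrix.coeff_one_charpoly_map_add_single_X]
  ring

theorem evalMat_vTI_of_isNilpotent {k : Type*} [Field k] {n t : ℕ} {A : Matrix (Fin n) (Fin n) k}
    (hA : IsNilpotent A) (hn : 0 < n) (htn : t < n) {I : Finset ℕ} (hI : I ⊆ Finset.Icc 1 n)
    (hcard : I.card = t) :
    evalMat A (vTI k n t hn I) = (∏ m, (-1) ^ (I.orderEmbOfFin hcard m + 1)) *
      (Matrix.of fun a m : Fin t =>
        (A ^ (I.orderEmbOfFin hcard m - 1)) ⟨n - 1, by omega⟩ (Fin.castLE htn.le a)).det := by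
  rw [vTI, evalMat, RingHom.map_det, ← Matrix.det_mul_row]
  congr 1
  ext a m
  have hj := Finset.mem_Icc.mp (hI (I.orderEmbOfFin_mem hcard m))
  have hrow : (⟨(a : ℕ) % n, Nat.mod_lt _ hn⟩ : Fin n) = Fin.castLE htn.le a :=
    Fin.ext (Nat.mod_eq_of_lt (a.isLt.trans htn))
  simp only [RingHom.mapMatrix_apply, Matrix.map_apply, Matrix.of_apply, hrow,
    Finset.getD_sort_eq_orderEmbOfFin I hcard]
  rw [← evalMat, evalMat_pderiv_sPoly, Matrix.coeff_adjugate_charmatrix_of_isNilpotent hA _ _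
    (by simp; omega), Fintype.card_fin, show n - 1 - (n - I.orderEmbOfFin hcard m) =
      I.orderEmbOfFin hcard m - 1 by omega]

theorem evalMat_vTI_chainMatrix {k : Type*} [Field k] {n t : ℕ} (hn : 0 < n) (htn : t < n)
    {e : Equiv.Perm (Fin n)} (he_last : (e ⟨n - 1, by omega⟩ : ℕ) = 0) {J₀ : Fin t → ℕ}
    (he : ∀ a, (e (Fin.castLE htn.le a) : ℕ) + 1 = J₀ a) {I : Finset ℕ}
    (hI : I ⊆ Finset.Icc 1 n) (hcard : I.card = t) :
    evalMat (Matrix.chainMatrix k e) (vTI k n t hn I) =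
      (∏ m, (-1) ^ (I.orderEmbOfFin hcard m + 1)) *
        (Matrix.of fun a m : Fin t =>
          if J₀ a = I.orderEmbOfFin hcard m then (1 : k) else 0).det := by
  rw [evalMat_vTI_of_isNilpotent (Matrix.isNilpotent_chainMatrix e) hn htn hI hcard]
  congr 2
  ext a m
  have hj := Finset.mem_Icc.mp (hI (I.orderEmbOfFin_mem hcard m))
  have hea := he a
  rw [Matrix.of_apply, Matrix.of_apply, Matrix.chainMatrix_pow, Matrix.of_apply, he_last, zero_add]
  exact if_congr (by omega) rfl rfl

/-- The chain along which `chainMatrix e` shifts starts at the last index and reaches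
index `a` after `J a - 1` steps. -/
theorem exists_chain_perm {n t : ℕ} (htn : t < n) {J : Fin t → ℕ} (hJ : Function.Injective J)
    (hJmem : ∀ a, J a ∈ Finset.Icc 2 n) :
    ∃ e : Equiv.Perm (Fin n), (e ⟨n - 1, by omega⟩ : ℕ) = 0 ∧
      ∀ a, (e (Fin.castLE htn.le a) : ℕ) + 1 = J a := by
  have hJ' : ∀ a, 2 ≤ J a ∧ J a ≤ n := fun a => Finset.mem_Icc.mp (hJmem a)
  have hg : Function.Injective
      (Fin.cons ⟨n - 1, by omega⟩ (Fin.castLE htn.le) : Fin (t + 1) → Fin n) := by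
    refine Fin.cons_injective_iff.mpr ⟨?_, Fin.castLE_injective _⟩
    rintro ⟨a, ha⟩
    simp only [Fin.ext_iff, Fin.val_castLE] at ha
    omega
  have hv : Function.Injective
      (Fin.cons ⟨0, by omega⟩ (fun a => ⟨J a - 1, by grind⟩) : Fin (t + 1) → Fin n) := by
    refine Fin.cons_injective_iff.mpr ⟨?_, fun a b hab => hJ ?_⟩
    · rintro ⟨a, ha⟩
      simp only [Fin.ext_iff] at ha
      grind
    · simp only [Fin.ext_iff] at hab
      grind
  obtain ⟨e, he⟩ := Equiv.Perm.exists_apply_eq_of_injective hg hv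
  refine ⟨e, by simpa using congrArg Fin.val (he 0), fun a => ?_⟩
  have := congrArg Fin.val (he a.succ)
  simp only [Fin.cons_succ] at this
  grind

/-- The restrictions of the `v_{t,I}` to the set of nilpotent matrices are linearly
independent over `k`. -/
theorem stmt10 (k : Type*) [Field k] (n t : ℕ) (hn : 2 ≤ n)
    (htn : t ≤ n - 1) (c : Finset ℕ → k)
    (h : ∀ A : Matrix (Fin n) (Fin n) k, IsNilpotent A →
      ∑ I ∈ (Finset.Icc 2 n).powersetCard t, c I * evalMat A (vTI k n t (by omega) I) = 0) :
    ∀ I ∈ (Finset.Icc 2 n).powersetCard t, c I = 0 := by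
  intro I₀ hI₀
  obtain ⟨hsub₀, hcard₀⟩ := Finset.mem_powersetCard.mp hI₀
  have htn' : t < n := by omega
  obtain ⟨e, he_last, he⟩ := exists_chain_perm htn' (I₀.orderEmbOfFin hcard₀).injective
    fun a => hsub₀ (I₀.orderEmbOfFin_mem hcard₀ a)
  have hval : ∀ I ∈ (Finset.Icc 2 n).powersetCard t,
      c I * evalMat (Matrix.chainMatrix k e) (vTI k n t (by omega) I) =
        if I = I₀ then c I₀ * ∏ m, (-1) ^ (I₀.orderEmbOfFin hcard₀ m + 1) else 0 := by
    intro I hI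
    obtain ⟨hsub, hcard⟩ := Finset.mem_powersetCard.mp hI
    rw [evalMat_vTI_chainMatrix (by omega) htn' he_last he
        (hsub.trans (Finset.Icc_subset_Icc_left (by norm_num))) hcard,
      Finset.det_ite_orderEmbOfFin_eq hcard hcard₀]
    split_ifs with hI <;> simp [hI]
  have hsum := h _ (Matrix.isNilpotent_chainMatrix e)
  rw [Finset.sum_congr rfl hval, Finset.sum_ite_eq', if_pos hI₀] at hsum
  exact (mul_eq_zero.mp hsum).resolve_right
    (Finset.prod_ne_zero_iff.mpr fun _ _ => pow_ne_zero _ (neg_ne_zero.mpr one_ne_zero))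
end

section
/- Let l1, l2 ≥ 0 be integers with 3 dividing l1 + 2·l2, and put b = (l1 + 2·l2)/3 and a = min(l1, l2). Then the number of semistandard Young tableaux of shape (l1+l2, l2) (rows weakly increasing, columns strictly increasing) with all entries in {0, 1, 2} such that each of the values 0, 1 and 2 occurs exactly b times equals a + 1. -/
/-!
Each row of a semistandard tableau with entries `< 3` has the form `0^p 1^(q-p) 2^(…)`. Column
strictness forces the second row to be `1^t 2^(n-t)` with `t ≤ p` and `n ≤ q`, and uniform content
`b` forces `p = b` and `q = 2b - t`. So these tableaux are parametrised by `t` alone, which ranges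
over the integers `max 0 (2b - m) ≤ t ≤ min n (min b (2b - n))`; for `m = l1 + l2`, `n = l2`,
`3b = l1 + 2 l2` there are `min l1 l2 + 1` of them.
-/

open Finset

theorem Finset.filter_range_eq_range_card {m : ℕ} {P : ℕ → Prop} [DecidablePred P]
    (hP : ∀ i j, i ≤ j → j < m → P j → P i) :
    {j ∈ range m | P j} = range #{j ∈ range m | P j} := by
  refine eq_of_subset_of_card_le (fun j hj => ?_) (by simp)
  have hlower : range (j + 1) ⊆ {j ∈ range m | P j} := by
    intro i hi
    simp only [mem_filter, mem_range] at hi hj ⊢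
    exact ⟨by omega, hP i j (by omega) hj.1 hj.2⟩
  have := card_le_card hlower
  rw [card_range] at this
  exact mem_range.2 this

theorem mem_ofRowLens_pair {m n : ℕ} (hs : List.SortedGE [m, n]) {i j : ℕ} :
    (i, j) ∈ YoungDiagram.ofRowLens [m, n] hs ↔ i = 0 ∧ j < m ∨ i = 1 ∧ j < n := by
  rw [YoungDiagram.mem_ofRowLens]
  constructor
  · rintro ⟨hi, hj⟩
    simp only [List.length_cons, List.length_nil] at hi
    interval_cases i <;> simp_all
  · rintro (⟨rfl, h⟩ | ⟨rfl, h⟩) <;> exact ⟨by simp, by simpa⟩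

theorem card_filter_cells_ofRowLens_pair {m n : ℕ} (hs : List.SortedGE [m, n])
    (P : ℕ × ℕ → Prop) [DecidablePred P] :
    #{c ∈ (YoungDiagram.ofRowLens [m, n] hs).cells | P c} =
      #{j ∈ range m | P (0, j)} + #{j ∈ range n | P (1, j)} := by
  have hcells : (YoungDiagram.ofRowLens [m, n] hs).cells =
      (range m).map ⟨(0, ·), Prod.mk_right_injective 0⟩ ∪
        (range n).map ⟨(1, ·), Prod.mk_right_injective 1⟩ := by
    ext ⟨i, j⟩
    simp [mem_ofRowLens_pair, eq_comm (a := i), and_comm]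
  rw [hcells, filter_union, card_union_of_disjoint, filter_map, filter_map, card_map, card_map]
  · rfl
  · exact disjoint_filter_filter (disjoint_left.2 (by simp))

/-- The weakly increasing row `0 … 0 1 … 1 2 2 …` whose `0`s sit in the columns `j < p` and whose
`1`s sit in the columns `p ≤ j < q`. -/
def ternaryRow (p q j : ℕ) : ℕ :=
  if j < p then 0 else if j < q then 1 else 2

theorem monotone_ternaryRow (p q : ℕ) : Monotone (ternaryRow p q) := by
  intro i j hij
  unfold ternaryRow
  split_ifs <;> omega

theorem ternaryRow_lt_three (p q j : ℕ) : ternaryRow p q j < 3 := by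
  unfold ternaryRow
  split_ifs <;> omega

theorem card_filter_ternaryRow {m p q : ℕ} (hpq : p ≤ q) (hqm : q ≤ m) :
    #{j ∈ range m | ternaryRow p q j = 0} = p ∧ #{j ∈ range m | ternaryRow p q j = 1} = q - p ∧
      #{j ∈ range m | ternaryRow p q j = 2} = m - q := by
  have h0 : {j ∈ range m | ternaryRow p q j = 0} = range p := by
    ext j; rw [mem_filter, mem_range, mem_range]; unfold ternaryRow; grind
  have h1 : {j ∈ range m | ternaryRow p q j = 1} = Ico p q := by
    ext j; rw [mem_filter, mem_range, mem_Ico]; unfold ternaryRow; grind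
  have h2 : {j ∈ range m | ternaryRow p q j = 2} = Ico q m := by
    ext j; rw [mem_filter, mem_range, mem_Ico]; unfold ternaryRow; grind
  simp [h0, h1, h2]

theorem exists_eq_ternaryRow {m : ℕ} {f : ℕ → ℕ} (hf : MonotoneOn f (Set.Iio m))
    (hf3 : ∀ j < m, f j < 3) :
    ∃ p q, p ≤ q ∧ q ≤ m ∧ ∀ j < m, f j = ternaryRow p q j := by
  have hlower : ∀ v, ∀ i j, i ≤ j → j < m → f j ≤ v → f i ≤ v := fun v i j hij hj hjv =>
    (hf (lt_of_le_of_lt hij hj) hj hij).trans hjv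
  refine ⟨#{j ∈ range m | f j ≤ 0}, #{j ∈ range m | f j ≤ 1},
    card_le_card (monotone_filter_right _ fun _ _ h => h.trans zero_le_one),
    (card_filter_le _ _).trans_eq (card_range m), fun j hj => ?_⟩
  have h0 := congrArg (j ∈ ·) (filter_range_eq_range_card (hlower 0))
  have h1 := congrArg (j ∈ ·) (filter_range_eq_range_card (hlower 1))
  simp only [mem_filter, mem_range, hj, true_and, eq_iff_iff] at h0 h1
  have := hf3 j hj
  unfold ternaryRow
  split_ifs <;> omega

theorem le_of_ternaryRow_lt {n p q t : ℕ} (hpq : p ≤ q) (ht : t ≤ n)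
    (h : ∀ j < n, ternaryRow p q j < ternaryRow 0 t j) : t ≤ p ∧ n ≤ q := by
  constructor
  · by_contra! hpt
    have := h p (by omega)
    simp only [ternaryRow] at this
    split_ifs at this <;> omega
  · by_contra! hqn
    have := h (n - 1) (by omega)
    simp only [ternaryRow] at this
    split_ifs at this <;> omega

theorem ternaryRow_lt_of_le {n p q t : ℕ} (htp : t ≤ p) (hnq : n ≤ q) :
    ∀ j < n, ternaryRow p q j < ternaryRow 0 t j := by
  intro j hj
  unfold ternaryRow
  split_ifs <;> omega

def SemistandardYoungTableau.HasUniformContent {μ : YoungDiagram}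
    (T : SemistandardYoungTableau μ) (k b : ℕ) : Prop :=
  (∀ c ∈ μ.cells, T c.1 c.2 < k) ∧ ∀ v < k, #{c ∈ μ.cells | T c.1 c.2 = v} = b

section TwoRow

variable {m n : ℕ} (hs : List.SortedGE [m, n])

def twoRowEntry (m n p q t i j : ℕ) : ℕ :=
  if i = 0 ∧ j < m then ternaryRow p q j else if i = 1 ∧ j < n then ternaryRow 0 t j else 0

theorem filter_twoRowEntry_zero (p q t v : ℕ) :
    {j ∈ range m | twoRowEntry m n p q t 0 j = v} = {j ∈ range m | ternaryRow p q j = v} :=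
  filter_congr fun j hj => by simp [twoRowEntry, mem_range.1 hj]

theorem filter_twoRowEntry_one (p q t v : ℕ) :
    {j ∈ range n | twoRowEntry m n p q t 1 j = v} = {j ∈ range n | ternaryRow 0 t j = v} :=
  filter_congr fun j hj => by simp [twoRowEntry, mem_range.1 hj]

def twoRowTableau (p q t : ℕ) (htp : t ≤ p) (hnq : n ≤ q) :
    SemistandardYoungTableau (YoungDiagram.ofRowLens [m, n] hs) where
  entry := twoRowEntry m n p q t
  row_weak' {i j₁ j₂} hj hcell := by
    rcases (mem_ofRowLens_pair hs).1 hcell with ⟨rfl, hj₂⟩ | ⟨rfl, hj₂⟩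
    · simp only [twoRowEntry, true_and, hj₂, lt_trans hj hj₂, if_true]
      exact monotone_ternaryRow p q hj.le
    · simp only [twoRowEntry, one_ne_zero, false_and, true_and, hj₂, lt_trans hj hj₂, if_true,
        if_false]
      exact monotone_ternaryRow 0 t hj.le
  col_strict' {i₁ i₂ j} hi hcell := by
    rcases (mem_ofRowLens_pair hs).1 hcell with ⟨rfl, -⟩ | ⟨rfl, hj⟩
    · omega
    obtain rfl : i₁ = 0 := by omega
    have hjm : j < m := lt_of_lt_of_le hj (by simpa using hs.pairwise)
    simp only [twoRowEntry, true_and, hjm, hj, one_ne_zero, false_and, if_true, if_false]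
    exact ternaryRow_lt_of_le htp hnq j hj
  zeros' {i j} hcell := by
    rw [mem_ofRowLens_pair] at hcell
    simp only [twoRowEntry]
    split_ifs <;> tauto

theorem exists_eq_twoRowTableau (T : SemistandardYoungTableau (YoungDiagram.ofRowLens [m, n] hs))
    (hT : ∀ c ∈ (YoungDiagram.ofRowLens [m, n] hs).cells, T c.1 c.2 < 3) :
    ∃ p q t, ∃ (htp : t ≤ p) (hnq : n ≤ q), p ≤ q ∧ q ≤ m ∧ t ≤ n ∧
      T = twoRowTableau hs p q t htp hnq := by
  have hcell₀ : ∀ j < m, (0, j) ∈ YoungDiagram.ofRowLens [m, n] hs := fun j hj =>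
    (mem_ofRowLens_pair hs).2 (Or.inl ⟨rfl, hj⟩)
  have hcell₁ : ∀ j < n, (1, j) ∈ YoungDiagram.ofRowLens [m, n] hs := fun j hj =>
    (mem_ofRowLens_pair hs).2 (Or.inr ⟨rfl, hj⟩)
  have hnm : n ≤ m := by simpa using hs.pairwise
  obtain ⟨p, q, hpq, hqm, hrow₀⟩ := exists_eq_ternaryRow (f := T 0)
    (fun _ _ j hj hij => T.row_weak_of_le hij (hcell₀ j hj)) (fun j hj => hT _ (hcell₀ j hj))
  obtain ⟨s, t, hst, htn, hrow₁⟩ := exists_eq_ternaryRow (f := T 1)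
    (fun _ _ j hj hij => T.row_weak_of_le hij (hcell₁ j hj)) (fun j hj => hT _ (hcell₁ j hj))
  have hcol : ∀ j < n, T 0 j < T 1 j := fun j hj => T.col_strict zero_lt_one (hcell₁ j hj)
  obtain rfl : s = 0 := by
    by_contra hs₀
    have := hcol 0 (by omega)
    rw [hrow₁ 0 (by omega)] at this
    simp [ternaryRow, Nat.pos_of_ne_zero hs₀] at this
  obtain ⟨htp, hnq⟩ := le_of_ternaryRow_lt hpq htn fun j hj => by
    simpa only [hrow₀ j (by omega), hrow₁ j hj] using hcol j hj
  refine ⟨p, q, t, htp, hnq, hpq, hqm, htn, SemistandardYoungTableau.ext fun i j => ?_⟩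
  change T i j = twoRowEntry m n p q t i j
  unfold twoRowEntry
  split_ifs with h₀ h₁
  · obtain ⟨rfl, hj⟩ := h₀
    exact hrow₀ j hj
  · obtain ⟨rfl, hj⟩ := h₁
    exact hrow₁ j hj
  · exact T.zeros (by rw [mem_ofRowLens_pair]; tauto)

theorem hasUniformContent_twoRowTableau_iff {b p q t : ℕ} (htp : t ≤ p) (hnq : n ≤ q)
    (hpq : p ≤ q) (hqm : q ≤ m) (htn : t ≤ n) :
    (twoRowTableau hs p q t htp hnq).HasUniformContent 3 b ↔
      p = b ∧ q - p + t = b ∧ m - q + (n - t) = b := by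
  have hcount : ∀ v, #{c ∈ (YoungDiagram.ofRowLens [m, n] hs).cells |
      twoRowTableau hs p q t htp hnq c.1 c.2 = v} =
      #{j ∈ range m | ternaryRow p q j = v} + #{j ∈ range n | ternaryRow 0 t j = v} := fun v => by
    rw [card_filter_cells_ofRowLens_pair]
    exact congrArg₂ (· + ·) (congrArg card (filter_twoRowEntry_zero (n := n) p q t v))
      (congrArg card (filter_twoRowEntry_one (m := m) p q t v))
  obtain ⟨r₀, r₁, r₂⟩ := card_filter_ternaryRow hpq hqm
  obtain ⟨s₀, s₁, s₂⟩ := card_filter_ternaryRow (Nat.zero_le t) htn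
  have hlt : ∀ i j, twoRowTableau hs p q t htp hnq i j < 3 := fun i j => by
    change twoRowEntry m n p q t i j < 3
    unfold twoRowEntry
    split_ifs <;> simp [ternaryRow_lt_three]
  constructor
  · rintro ⟨-, h⟩
    have h₀ := h 0 (by norm_num)
    have h₁ := h 1 (by norm_num)
    have h₂ := h 2 (by norm_num)
    rw [hcount] at h₀ h₁ h₂
    omega
  · rintro ⟨h₀, h₁, h₂⟩
    refine ⟨fun c _ => hlt c.1 c.2, fun v hv => ?_⟩
    rw [hcount]
    interval_cases v <;> omega

theorem card_filter_twoRowTableau_eq_one {p q t : ℕ} (htp : t ≤ p) (hnq : n ≤ q) (htn : t ≤ n) :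
    #{j ∈ range n | twoRowTableau hs p q t htp hnq 1 j = 1} = t := by
  change #{j ∈ range n | twoRowEntry m n p q t 1 j = 1} = t
  rw [filter_twoRowEntry_one, (card_filter_ternaryRow (Nat.zero_le t) htn).2.1, Nat.sub_zero]

theorem card_hasUniformContent_three_twoRow {b : ℕ} (hmn : m + n = 3 * b) :
    Nat.card {T : SemistandardYoungTableau (YoungDiagram.ofRowLens [m, n] hs) //
      T.HasUniformContent 3 b} = min (min n b) (2 * b - n) + 1 - (2 * b - m) := by
  -- `2 * b - m` truncates to the lower bound `max 0 (2b - m)`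
  let f : Icc (2 * b - m) (min (min n b) (2 * b - n)) →
      {T : SemistandardYoungTableau (YoungDiagram.ofRowLens [m, n] hs) //
        T.HasUniformContent 3 b} := fun t =>
    have ht := mem_Icc.1 t.2
    ⟨twoRowTableau hs b (2 * b - t) t (by omega) (by omega),
      (hasUniformContent_twoRowTableau_iff hs _ _ (by omega) (by omega) (by omega)).2
        ⟨rfl, by omega, by omega⟩⟩
  have hf : Function.Bijective f := by
    constructor
    · intro t₁ t₂ h
      have ht₁ := mem_Icc.1 t₁.2
      have ht₂ := mem_Icc.1 t₂.2
      have hrow := congrArg (fun T => #{j ∈ range n | T.1 1 j = 1}) h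
      simp only [f, card_filter_twoRowTableau_eq_one hs _ _ (by omega : t₁.1 ≤ n),
        card_filter_twoRowTableau_eq_one hs _ _ (by omega : t₂.1 ≤ n)] at hrow
      exact Subtype.ext hrow
    · rintro ⟨T, hT⟩
      obtain ⟨p, q, t, htp, hnq, hpq, hqm, htn, rfl⟩ := exists_eq_twoRowTableau hs T hT.1
      obtain ⟨rfl, hq, -⟩ := (hasUniformContent_twoRowTableau_iff hs htp hnq hpq hqm htn).1 hT
      obtain rfl : q = 2 * p - t := by omega
      exact ⟨⟨t, mem_Icc.2 (by omega)⟩, rfl⟩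
  rw [← Nat.card_eq_of_bijective f hf, Nat.card_eq_fintype_card, Fintype.card_coe, Nat.card_Icc]

end TwoRow

/-- The number of semistandard Young tableaux of shape `(l1+l2, l2)` with entries in
`{0, 1, 2}` in which each of `0`, `1`, `2` occurs exactly `b` times, where
`l1 + 2·l2 = 3b`, equals `min l1 l2 + 1`. -/
theorem stmt16 (l1 l2 b a : ℕ) (hdiv : l1 + 2 * l2 = 3 * b) (ha : a = min l1 l2)
    (hs : List.SortedGE [l1 + l2, l2]) :
    Nat.card {T : SemistandardYoungTableau (YoungDiagram.ofRowLens [l1 + l2, l2] hs) //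
      (∀ c ∈ (YoungDiagram.ofRowLens [l1 + l2, l2] hs).cells, T c.1 c.2 < 3) ∧
      ∀ v < 3, ((YoungDiagram.ofRowLens [l1 + l2, l2] hs).cells.filter
        (fun c => T c.1 c.2 = v)).card = b} = a + 1 :=
  (card_hasUniformContent_three_twoRow hs (by omega)).trans (by omega)
end
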